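/- Intersection-loop removal (Appendix Lemma): Let G be an acyclic mixed graph and E = {(x₁,y),…,(x_k,y)}. There exists a GIS-witness for E with all paths half-treks if and only if there exists such a witness whose set of paths {p₁,…,p_k} contains no intersection loop, where an intersection loop is a sequence of distinct half-treks p_{i₁},…,p_{i_m} from the witness such that for each l (indices taken cyclically mod m), Right(p_{i_l}) intersects Left(p_{i_{l+1}}). -/

import Mathlib

/-!
Take a half-trek witness of minimal total length and suppose it has an intersection loop
`p_{i₁}, …, p_{i_m}`. The `Left` set of a half-trek is its source, so each source `z_{i_{l+1}}`
lies on the directed part of `p_{i_l}`. Replacing `p_{i_l}` by its directed tail from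
`z_{i_{l+1}}` permutes the sources cyclically, keeps the `Right` sets disjoint and strictly
shortens the witness; a contradiction.

The tail needs a separating set of its own: `W_{i_{l+1}}` if it misses the inner vertices of the
tail; otherwise `W_{i_l}` if `z_{i_{l+1}}` has a descendant in it (splice the head of `p_{i_l}`
with any open path from `z_{i_{l+1}}` to `y`); otherwise the canonical separator of ancestors of
`{z_{i_{l+1}}, y}` that are neither descendants of `y` nor on the tail.
-/

open scoped Classical Matrix

namespace SEMPaper

/-- The kind of a step along a path in a mixed graph, relative to the direction of travel:
a forward directed edge, a backward directed edge, or a bidirected edge. -/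
inductive EKind : Type
  | fwd | bwd | bi
deriving DecidableEq

/-- An acyclic mixed graph: directed edges `dir`, bidirected edges `bi` (symmetric), with
acyclic directed part. -/
structure MixedGraph (V : Type) where
  dir : V → V → Prop
  bi : V → V → Prop
  bi_symm : ∀ {i j}, bi i j → bi j i
  acyclic : Irreflexive (Relation.TransGen dir)

namespace MixedGraph

variable {V : Type} (G : MixedGraph V)

/-- `v` is a descendant of `u`: reachable from `u` by a directed path (including `u` itself). -/
def desc (u v : V) : Prop := Relation.ReflTransGen G.dir u v

/-- `G_{E−}`: the graph `G` with the directed edges in `E` deleted. -/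
def deleteDir (E : Set (V × V)) : MixedGraph V where
  dir i j := G.dir i j ∧ (i, j) ∉ E
  bi := G.bi
  bi_symm h := G.bi_symm h
  acyclic v h := G.acyclic v (by
    have key : ∀ a b, Relation.TransGen (fun i j => G.dir i j ∧ (i, j) ∉ E) a b →
        Relation.TransGen G.dir a b := by
      intro a b h
      induction h with
      | single hab => exact Relation.TransGen.single hab.1
      | tail _ hab ih => exact Relation.TransGen.tail ih hab.1
    exact key v v h)

/-- Validity of a single step from `a` to `b` of kind `k`. -/
def stepOK (a b : V) : EKind → Prop
  | .fwd => G.dir a b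
  | .bwd => G.dir b a
  | .bi => G.bi a b

end MixedGraph

/-- Walks in a mixed graph: sequences of consecutive steps along directed edges (in either
direction) or bidirected edges. -/
inductive Walk {V : Type} (G : MixedGraph V) : V → V → Type
  | nil (v : V) : Walk G v v
  | cons {a b c : V} (k : EKind) (h : G.stepOK a b k) (w : Walk G b c) : Walk G a c

namespace Walk

variable {V : Type} {G : MixedGraph V}

/-- The list of vertices visited by a walk. -/
def support : ∀ {x y : V}, Walk G x y → List V
  | _, _, .nil v => [v]
  | x, _, .cons _ _ w => x :: w.support

/-- The list of steps of a walk: (source, target, kind). -/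
def darts : ∀ {x y : V}, Walk G x y → List (V × V × EKind)
  | _, _, .nil _ => []
  | _, _, @Walk.cons _ _ x b _ k _ w => (x, b, k) :: w.darts

/-- A path is a walk visiting distinct vertices. -/
def IsPath {x y : V} (w : Walk G x y) : Prop := w.support.Nodup

/-- A vertex with incoming step of kind `kin` and outgoing step of kind `kout` is a collider
iff both adjacent edges point into it. -/
def isColl : EKind → EKind → Bool
  | .fwd, .bwd => true
  | .fwd, .bi => true
  | .bi, .bwd => true
  | .bi, .bi => true
  | _, _ => false

/-- Auxiliary predicate: the walk, whose first vertex was entered via a step of kind `kin`,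
is unblocked given `W` (each internal vertex: colliders are in `W` or have a descendant
in `W`; non-colliders are outside `W`). -/
def UnblockedFrom (W : Set V) : ∀ {x y : V}, EKind → Walk G x y → Prop
  | _, _, _, .nil _ => True
  | x, _, kin, .cons k _ w =>
      (if isColl kin k then ∃ d ∈ W, G.desc x d else x ∉ W) ∧ UnblockedFrom W k w

/-- The walk is unblocked given `W`. -/
def Unblocked (W : Set V) : ∀ {x y : V}, Walk G x y → Prop
  | _, _, .nil _ => True
  | _, _, .cons k _ w => UnblockedFrom W k w

/-- `Left(π)`: the start vertex of `π` together with every vertex with a directed edge of `π`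
leaving it in the direction of the start. -/
def Left {x y : V} (w : Walk G x y) : Set V :=
  insert x {v | ∃ a, (a, v, EKind.bwd) ∈ w.darts}

/-- `Right(π)`: the end vertex of `π` together with every vertex with a directed edge of `π`
leaving it in the direction of the end. -/
def Right {x y : V} (w : Walk G x y) : Set V :=
  insert y {v | ∃ b, (v, b, EKind.fwd) ∈ w.darts}

/-- The walk traverses the directed edge `a → b` (in either direction of travel). -/
def UsesDirEdge {x y : V} (w : Walk G x y) (a b : V) : Prop :=
  (a, b, EKind.fwd) ∈ w.darts ∨ (b, a, EKind.bwd) ∈ w.darts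

/-- The directed edges traversed by the walk. -/
def dirEdges {x y : V} (w : Walk G x y) : Set (V × V) :=
  {e | (e.1, e.2, EKind.fwd) ∈ w.darts ∨ (e.2, e.1, EKind.bwd) ∈ w.darts}

/-- The bidirected edges traversed by the walk (up to orientation). -/
def biEdges {x y : V} (w : Walk G x y) : Set (V × V) :=
  {e | (e.1, e.2, EKind.bi) ∈ w.darts ∨ (e.2, e.1, EKind.bi) ∈ w.darts}

/-- A half-trek from the start vertex: a directed path, optionally preceded by a single
initial bidirected edge. -/
def IsHalfTrek : ∀ {x y : V}, Walk G x y → Prop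
  | _, _, .nil _ => True
  | _, _, .cons k _ w => k ≠ EKind.bwd ∧ ∀ d ∈ w.darts, d.2.2 = EKind.fwd

/-- The subpath of `w` from `v` to the end points into `v` (the edge of `w` adjacent to `v` on
the end-side has its arrowhead at `v`). -/
def pointsBackAt {x y : V} (w : Walk G x y) (v : V) : Prop :=
  ∃ b k, (v, b, k) ∈ w.darts ∧ k ≠ EKind.fwd

/-- The subpath of `w` from the start to `v` points into `v` (the edge of `w` adjacent to `v`
on the start-side has its arrowhead at `v`). -/
def pointsForwardAt {x y : V} (w : Walk G x y) (v : V) : Prop :=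
  ∃ a k, (a, v, k) ∈ w.darts ∧ k ≠ EKind.bwd

end Walk

/-- d-separation: `x` and `y` are d-separated given `W` in `G` if no path between them is
unblocked given `W`. -/
def MixedGraph.dsep {V : Type} (G : MixedGraph V) (x y : V) (W : Set V) : Prop :=
  ∀ w : Walk G x y, w.IsPath → ¬ w.Unblocked W


/-- A GIS-witness for `E = {(x i, y)}`: for each `i`, `W_i` contains no descendants of `y`
and `z_i ⫫ y` given `W_i` in `G_{E−}`; `p_i` is a path between `z_i` and `x_i` unblocked
given `W_i`; and the paths have no sided intersection. -/
def GISWitness {V : Type} (G : MixedGraph V) {k : ℕ} (x : Fin k → V) (y : V)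
    (z : Fin k → V) (Wc : Fin k → Set V) (p : ∀ i, Walk G (z i) (x i)) : Prop :=
  (∀ i, (∀ w ∈ Wc i, ¬ G.desc y w) ∧
    (G.deleteDir {e | ∃ j, e = (x j, y)}).dsep (z i) y (Wc i)) ∧
  (∀ i, (p i).IsPath ∧ (p i).Unblocked (Wc i)) ∧
  (∀ i j, i ≠ j → (p i).Left ∩ (p j).Left = ∅ ∧ (p i).Right ∩ (p j).Right = ∅)

namespace MixedGraph

variable {V : Type} {G : MixedGraph V}

lemma desc_antisymm {a b : V} (hab : G.desc a b) (hba : G.desc b a) : a = b := by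
  rcases Relation.reflTransGen_iff_eq_or_transGen.1 hab with h | h
  · exact h.symm
  rcases Relation.reflTransGen_iff_eq_or_transGen.1 hba with h' | h'
  · exact h'
  · exact absurd (h.trans h') (G.acyclic a)

lemma desc_of_deleteDir {E : Set (V × V)} {a b : V} (h : (G.deleteDir E).desc a b) :
    G.desc a b :=
  Relation.ReflTransGen.mono (fun _ _ h => h.1) _ _ h

lemma desc_deleteDir_of_desc {E : Set (V × V)} {y v : V} (hEy : ∀ e ∈ E, e.2 = y)
    (h : G.desc y v) : (G.deleteDir E).desc y v := by
  induction h with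
  | refl => exact Relation.ReflTransGen.refl
  | @tail b c _ hbc ih =>
    by_cases hcy : c = y
    · exact hcy ▸ Relation.ReflTransGen.refl
    · exact ih.tail ⟨hbc, fun hmem => hcy (hEy _ hmem)⟩

end MixedGraph

namespace Walk

variable {V : Type} {G : MixedGraph V} {W : Set V}

def append : ∀ {a b c : V}, Walk G a b → Walk G b c → Walk G a c
  | _, _, _, .nil _, w => w
  | _, _, _, .cons k h u, w => .cons k h (u.append w)

@[simp] lemma cons_append {a b c d : V} (k : EKind) (h : G.stepOK a b k) (u : Walk G b c)
    (w : Walk G c d) : (Walk.cons k h u).append w = .cons k h (u.append w) := rfl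

@[simp] lemma support_nil {a : V} : (Walk.nil (G := G) a).support = [a] := rfl

@[simp] lemma support_cons {a b c : V} (k : EKind) (h : G.stepOK a b k) (w : Walk G b c) :
    (Walk.cons k h w).support = a :: w.support := rfl

@[simp] lemma darts_nil {a : V} : (Walk.nil (G := G) a).darts = [] := rfl

@[simp] lemma darts_cons {a b c : V} (k : EKind) (h : G.stepOK a b k) (w : Walk G b c) :
    (Walk.cons k h w).darts = (a, b, k) :: w.darts := rfl

lemma support_eq_cons_map_darts : ∀ {a b : V} (w : Walk G a b),
    w.support = a :: w.darts.map (·.2.1)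
  | _, _, .nil _ => rfl
  | _, _, .cons _ _ w => by simp [support_eq_cons_map_darts w]

lemma support_eq_of_darts_eq {H : MixedGraph V} {a b : V} {w : Walk G a b} {w' : Walk H a b}
    (h : w.darts = w'.darts) : w.support = w'.support := by
  rw [support_eq_cons_map_darts, support_eq_cons_map_darts, h]

lemma start_mem_support {a b : V} (w : Walk G a b) : a ∈ w.support := by
  rw [support_eq_cons_map_darts]; exact List.mem_cons_self

lemma end_mem_support : ∀ {a b : V} (w : Walk G a b), b ∈ w.support
  | _, _, .nil _ => List.mem_singleton_self _
  | _, _, .cons _ _ w => List.mem_cons_of_mem _ (end_mem_support w)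

lemma mem_support_of_mem_darts : ∀ {a b : V} {w : Walk G a b} {d : V × V × EKind},
    d ∈ w.darts → d.1 ∈ w.support ∧ d.2.1 ∈ w.support
  | _, _, .cons _ _ w, d, hd => by
    rcases List.mem_cons.1 hd with rfl | hd
    · simp [start_mem_support]
    · have := mem_support_of_mem_darts hd
      simp [this]

lemma mem_support_of_mem_dirEdges {a b : V} {w : Walk G a b} {e : V × V}
    (he : e ∈ w.dirEdges) : e.1 ∈ w.support ∧ e.2 ∈ w.support := by
  rcases he with he | he
  · exact mem_support_of_mem_darts he
  · exact (mem_support_of_mem_darts he).symm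

lemma darts_append {a b c : V} (u : Walk G a b) (w : Walk G b c) :
    (u.append w).darts = u.darts ++ w.darts := by
  induction u with
  | nil => rfl
  | cons k h u ih => simp [ih]

lemma mem_support_append {a b c v : V} (u : Walk G a b) (w : Walk G b c) :
    v ∈ (u.append w).support ↔ v ∈ u.support ∨ v ∈ w.support := by
  induction u with
  | nil a =>
    refine ⟨fun h => Or.inr h, fun h => h.elim (fun hv => ?_) id⟩
    exact List.mem_singleton.1 hv ▸ start_mem_support w
  | cons k h u ih => simp [ih, or_assoc]

lemma isPath_cons {a b c : V} {k : EKind} {h : G.stepOK a b k} {w : Walk G b c} :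
    (Walk.cons k h w).IsPath ↔ a ∉ w.support ∧ w.IsPath :=
  List.nodup_cons

lemma IsPath.of_append_left {a b c : V} {u : Walk G a b} {w : Walk G b c}
    (h : (u.append w).IsPath) : u.IsPath := by
  induction u with
  | nil => exact List.nodup_singleton _
  | cons k hk u ih =>
    rw [cons_append, isPath_cons, mem_support_append] at h
    exact isPath_cons.2 ⟨fun hu => h.1 (Or.inl hu), ih h.2⟩

lemma IsPath.of_append_right {a b c : V} {u : Walk G a b} {w : Walk G b c}
    (h : (u.append w).IsPath) : w.IsPath := by
  induction u with
  | nil => exact h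
  | cons k hk u ih => exact ih (isPath_cons.1 h).2

lemma IsPath.eq_of_mem_append {a b c v : V} {u : Walk G a b} {w : Walk G b c}
    (h : (u.append w).IsPath) (hu : v ∈ u.support) (hw : v ∈ w.support) : v = b := by
  induction u with
  | nil => exact List.mem_singleton.1 hu
  | cons k hk u ih =>
    rw [cons_append, isPath_cons, mem_support_append] at h
    rcases List.mem_cons.1 hu with rfl | hu
    · exact absurd (Or.inr hw) h.1
    · exact ih h.2 hu hw

lemma IsPath.eq_of_mem_of_eq {a b v : V} {w : Walk G a b} (h : w.IsPath) (hab : a = b)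
    (hv : v ∈ w.support) : v = a := by
  cases w with
  | nil => exact List.mem_singleton.1 hv
  | cons k hk w => exact absurd (hab ▸ end_mem_support w) (isPath_cons.1 h).1

lemma exists_append_eq_first (Q : V → Prop) :
    ∀ {a b : V} (w : Walk G a b), (∃ x ∈ w.support, Q x) →
      ∃ (v : V) (u : Walk G a v) (r : Walk G v b), u.append r = w ∧ Q v ∧
        ∀ x ∈ u.support, x ≠ v → ¬ Q x
  | _, _, .nil a, hQ => by
    obtain ⟨x, hx, hQx⟩ := hQ
    obtain rfl := List.mem_singleton.1 hx
    exact ⟨x, .nil x, .nil x, rfl, hQx, fun y hy hyx => absurd (List.mem_singleton.1 hy) hyx⟩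
  | a, _, .cons k h w, hQ => by
    by_cases ha : Q a
    · exact ⟨a, .nil a, .cons k h w, rfl, ha,
        fun y hy hya => absurd (List.mem_singleton.1 hy) hya⟩
    obtain ⟨x, hx, hQx⟩ := hQ
    have hxw : x ∈ w.support :=
      (List.mem_cons.1 hx).resolve_left fun hxa => ha (hxa ▸ hQx)
    obtain ⟨v, u, r, rfl, hv, hu⟩ := exists_append_eq_first Q w ⟨x, hxw, hQx⟩
    refine ⟨v, .cons k h u, r, rfl, hv, fun y hy hyv => ?_⟩
    rcases List.mem_cons.1 hy with rfl | hy
    · exact ha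
    · exact hu y hy hyv

lemma exists_append_eq_of_mem_support {a b v : V} (w : Walk G a b) (hv : v ∈ w.support) :
    ∃ (u : Walk G a v) (r : Walk G v b), u.append r = w := by
  obtain ⟨v', u, r, hur, rfl, -⟩ := exists_append_eq_first (· = v) w ⟨v, hv, rfl⟩
  exact ⟨u, r, hur⟩

def IsDirected {a b : V} (w : Walk G a b) : Prop := ∀ d ∈ w.darts, d.2.2 = EKind.fwd

@[simp] lemma isDirected_nil {a : V} : (Walk.nil (G := G) a).IsDirected := by
  simp [IsDirected]

@[simp] lemma isDirected_cons {a b c : V} {k : EKind} {h : G.stepOK a b k} {w : Walk G b c} :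
    (Walk.cons k h w).IsDirected ↔ k = .fwd ∧ w.IsDirected := by
  simp [IsDirected]

lemma isDirected_append {a b c : V} {u : Walk G a b} {w : Walk G b c} :
    (u.append w).IsDirected ↔ u.IsDirected ∧ w.IsDirected := by
  simp [IsDirected, darts_append, or_imp, forall_and]

lemma IsDirected.desc_start {a b : V} {w : Walk G a b} (hw : w.IsDirected) :
    ∀ v ∈ w.support, G.desc a v := by
  induction w with
  | nil => intro v hv; rw [List.mem_singleton.1 hv]; exact .refl
  | cons k h w ih =>
    obtain ⟨rfl, hw'⟩ := isDirected_cons.1 hw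
    intro v hv
    rcases List.mem_cons.1 hv with rfl | hv
    · exact .refl
    · exact Relation.ReflTransGen.head h (ih hw' v hv)

lemma IsDirected.desc_end {a b : V} {w : Walk G a b} (hw : w.IsDirected) :
    ∀ v ∈ w.support, G.desc v b := by
  induction w with
  | nil => intro v hv; rw [List.mem_singleton.1 hv]; exact .refl
  | cons k h w ih =>
    obtain ⟨rfl, hw'⟩ := isDirected_cons.1 hw
    intro v hv
    rcases List.mem_cons.1 hv with rfl | hv
    · exact Relation.ReflTransGen.head h (ih hw' _ (start_mem_support w))
    · exact ih hw' v hv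

lemma IsDirected.isPath {a b : V} {w : Walk G a b} (hw : w.IsDirected) : w.IsPath := by
  induction w with
  | nil => exact List.nodup_singleton _
  | cons k h w ih =>
    obtain ⟨rfl, hw'⟩ := isDirected_cons.1 hw
    exact isPath_cons.2
      ⟨fun ha => G.acyclic _ (Relation.TransGen.head' h (hw'.desc_start _ ha)), ih hw'⟩

lemma exists_isDirected_of_desc {u v : V} (h : G.desc u v) : ∃ w : Walk G u v, w.IsDirected := by
  induction h using Relation.ReflTransGen.head_induction_on with
  | refl => exact ⟨.nil v, isDirected_nil⟩
  | head hab _ ih =>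
    obtain ⟨w, hw⟩ := ih
    exact ⟨.cons .fwd hab w, isDirected_cons.2 ⟨rfl, hw⟩⟩

lemma isColl_iff {kin k : EKind} : isColl kin k = true ↔ kin ≠ .bwd ∧ k ≠ .fwd := by
  cases kin <;> cases k <;> decide

lemma unblockedFrom_cons {a b c : V} {kin k : EKind} {h : G.stepOK a b k} {w : Walk G b c} :
    (Walk.cons k h w).UnblockedFrom W kin ↔
      (if isColl kin k then ∃ d ∈ W, G.desc a d else a ∉ W) ∧ w.UnblockedFrom W k :=
  Iff.rfl

lemma unblocked_cons {a b c : V} {k : EKind} {h : G.stepOK a b k} {w : Walk G b c} :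
    (Walk.cons k h w).Unblocked W ↔ w.UnblockedFrom W k :=
  Iff.rfl

lemma UnblockedFrom.unblocked {a b : V} {kin : EKind} {w : Walk G a b}
    (h : w.UnblockedFrom W kin) : w.Unblocked W := by
  cases w with
  | nil => trivial
  | cons k hk w => exact h.2

lemma UnblockedFrom.of_append_left {a b c : V} {kin : EKind} {u : Walk G a b}
    {w : Walk G b c} (h : (u.append w).UnblockedFrom W kin) : u.UnblockedFrom W kin := by
  induction u generalizing kin with
  | nil => trivial
  | cons k hk u ih => exact ⟨h.1, ih h.2⟩

lemma UnblockedFrom.exists_of_append_right {a b c : V} {kin : EKind} {u : Walk G a b}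
    {w : Walk G b c} (h : (u.append w).UnblockedFrom W kin) : ∃ k, w.UnblockedFrom W k := by
  induction u generalizing kin with
  | nil => exact ⟨kin, h⟩
  | cons k hk u ih => exact ih h.2

lemma Unblocked.of_append_left {a b c : V} {u : Walk G a b} {w : Walk G b c}
    (h : (u.append w).Unblocked W) : u.Unblocked W := by
  cases u with
  | nil => trivial
  | cons k hk u => exact UnblockedFrom.of_append_left (kin := k) h

lemma Unblocked.of_append_right {a b c : V} {u : Walk G a b} {w : Walk G b c}
    (h : (u.append w).Unblocked W) : w.Unblocked W := by
  cases u with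
  | nil => exact h
  | cons k hk u =>
    obtain ⟨k', hk'⟩ := UnblockedFrom.exists_of_append_right (kin := k) h
    exact hk'.unblocked

lemma Unblocked.unblockedFrom {a b : V} {w : Walk G a b} (h : w.Unblocked W) (ha : a ∉ W)
    (had : ∃ d ∈ W, G.desc a d) (kin : EKind) : w.UnblockedFrom W kin := by
  cases w with
  | nil => trivial
  | cons k hk w => exact ⟨by split <;> assumption, h⟩

lemma UnblockedFrom.mono {W' : Set V} {a b : V} {kin : EKind} {w : Walk G a b}
    (hp : w.IsPath) (hw : w.UnblockedFrom W kin)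
    (hW : ∀ v ∈ w.support, v ≠ b →
      (v ∉ W → v ∉ W') ∧ ((∃ d ∈ W, G.desc v d) → ∃ d ∈ W', G.desc v d)) :
    w.UnblockedFrom W' kin := by
  induction w generalizing kin with
  | nil => trivial
  | @cons a b c k h w ih =>
    have hac : a ≠ c := fun hac => (isPath_cons.1 hp).1 (hac ▸ end_mem_support w)
    obtain ⟨hW₁, hW₂⟩ := hW a List.mem_cons_self hac
    refine ⟨?_, ih (isPath_cons.1 hp).2 hw.2 fun v hv => hW v (List.mem_cons_of_mem _ hv)⟩
    have hchk := hw.1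
    split_ifs at hchk ⊢
    exacts [hW₂ hchk, hW₁ hchk]

lemma Unblocked.mono {W' : Set V} {a b : V} {w : Walk G a b} (hp : w.IsPath)
    (hw : w.Unblocked W)
    (hW : ∀ v ∈ w.support, v ≠ a → v ≠ b →
      (v ∉ W → v ∉ W') ∧ ((∃ d ∈ W, G.desc v d) → ∃ d ∈ W', G.desc v d)) :
    w.Unblocked W' := by
  cases w with
  | nil => trivial
  | cons k h w =>
    refine UnblockedFrom.mono (isPath_cons.1 hp).2 hw fun v hv => ?_
    exact hW v (List.mem_cons_of_mem _ hv) fun hva => (isPath_cons.1 hp).1 (hva ▸ hv)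

lemma IsDirected.unblockedFrom_iff {a b : V} {w : Walk G a b} (hw : w.IsDirected)
    (kin : EKind) : w.UnblockedFrom W kin ↔ ∀ v ∈ w.support, v ≠ b → v ∉ W := by
  induction w generalizing kin with
  | nil a => simp [UnblockedFrom]
  | @cons a b c k h w ih =>
    have hac : a ≠ c := fun hac => (isPath_cons.1 hw.isPath).1 (hac ▸ end_mem_support w)
    obtain ⟨rfl, hw'⟩ := isDirected_cons.1 hw
    rw [unblockedFrom_cons, if_neg (by simp [isColl_iff]), ih hw' .fwd]
    simp [hac]

/-- `kin ≠ .bwd`: the walk is entered through an arrowhead at its start. -/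
lemma UnblockedFrom.desc_of_ne_bwd {a c : V} {kin : EKind} {w : Walk G a c}
    (hw : w.UnblockedFrom W kin) (hkin : kin ≠ .bwd) : G.desc a c ∨ ∃ d ∈ W, G.desc a d := by
  induction w generalizing kin with
  | nil => exact Or.inl .refl
  | cons k h w ih =>
    by_cases hcoll : isColl kin k
    · exact Or.inr (by simpa [hcoll] using hw.1)
    have hk : k = .fwd := by simpa [isColl_iff, hkin] using hcoll
    subst hk
    rcases ih hw.2 (by decide) with hbc | ⟨d, hd, hbd⟩
    · exact Or.inl (Relation.ReflTransGen.head h hbc)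
    · exact Or.inr ⟨d, hd, Relation.ReflTransGen.head h hbd⟩

lemma Unblocked.desc_cases {a c : V} {w : Walk G a c} (hw : w.Unblocked W) :
    ∀ v ∈ w.support, G.desc v a ∨ G.desc v c ∨ ∃ d ∈ W, G.desc v d := by
  induction w with
  | nil a => exact fun v hv => Or.inl (List.mem_singleton.1 hv ▸ .refl)
  | @cons a b c k h w ih =>
    have hb : G.desc b a ∨ G.desc b c ∨ ∃ d ∈ W, G.desc b d := by
      by_cases hk : k = .bwd
      · subst hk; exact Or.inl (Relation.ReflTransGen.single h)
      · exact Or.inr (UnblockedFrom.desc_of_ne_bwd hw hk)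
    intro v hv
    rcases List.mem_cons.1 hv with rfl | hv
    · exact Or.inl .refl
    rcases ih (UnblockedFrom.unblocked hw) v hv with hvb | hvc | hvd
    · rcases hb with h1 | h1 | ⟨d, hd, h1⟩
      · exact Or.inl (hvb.trans h1)
      · exact Or.inr (Or.inl (hvb.trans h1))
      · exact Or.inr (Or.inr ⟨d, hd, hvb.trans h1⟩)
    · exact Or.inr (Or.inl hvc)
    · exact Or.inr (Or.inr hvd)

lemma exists_unblocked_path_of_desc {u v : V} (h : G.desc u v)
    (hW : ∀ x, G.desc u x → x ∉ W) : ∃ w : Walk G v u, w.IsPath ∧ w.Unblocked W := by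
  suffices ∃ w : Walk G v u, w.IsPath ∧ w.UnblockedFrom W .bwd ∧ ∀ x ∈ w.support, G.desc x v by
    obtain ⟨w, hp, hu, -⟩ := this
    exact ⟨w, hp, hu.unblocked⟩
  induction h with
  | refl =>
    exact ⟨.nil u, List.nodup_singleton _, trivial,
      fun x hx => List.mem_singleton.1 hx ▸ .refl⟩
  | @tail b c hub hbc ih =>
    obtain ⟨w, hp, hwu, hwd⟩ := ih
    refine ⟨.cons .bwd hbc w, isPath_cons.2 ⟨fun hc => ?_, hp⟩, ⟨?_, hwu⟩, fun x hx => ?_⟩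
    · exact G.acyclic c (Relation.TransGen.tail' (hwd c hc) hbc)
    · rw [if_neg (by simp [isColl_iff])]
      exact hW c (hub.tail hbc)
    · rcases List.mem_cons.1 hx with rfl | hx
      · exact .refl
      · exact (hwd x hx).tail hbc

lemma isHalfTrek_cons {a b c : V} {k : EKind} {h : G.stepOK a b k} {w : Walk G b c} :
    (Walk.cons k h w).IsHalfTrek ↔ k ≠ .bwd ∧ w.IsDirected :=
  Iff.rfl

lemma isHalfTrek_iff_darts {a b : V} {w : Walk G a b} :
    w.IsHalfTrek ↔ (∀ d ∈ w.darts.head?, d.2.2 ≠ .bwd) ∧ ∀ d ∈ w.darts.tail, d.2.2 = .fwd := by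
  cases w with
  | nil => simp [IsHalfTrek]
  | cons k h w => simp [isHalfTrek_cons, IsDirected]

lemma IsDirected.isHalfTrek {a b : V} {w : Walk G a b} (hw : w.IsDirected) : w.IsHalfTrek := by
  cases w with
  | nil => trivial
  | cons k h w =>
    obtain ⟨rfl, hw'⟩ := isDirected_cons.1 hw
    exact ⟨by decide, hw'⟩

lemma IsHalfTrek.left_eq {a b : V} {w : Walk G a b} (hw : w.IsHalfTrek) : w.Left = {a} := by
  have hbwd : ∀ d ∈ w.darts, d.2.2 ≠ .bwd := by
    cases w with
    | nil => simp
    | cons k h w =>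
      intro d hd
      rcases List.mem_cons.1 hd with rfl | hd
      · exact hw.1
      · rw [hw.2 d hd]; decide
  ext v
  simp only [Left, Set.mem_insert_iff, Set.mem_ofPred_eq, Set.mem_singleton_iff,
    or_iff_left_iff_imp]
  rintro ⟨u, hu⟩
  exact absurd rfl (hbwd _ hu)

lemma IsHalfTrek.unblocked_iff {a b : V} {w : Walk G a b} (hw : w.IsHalfTrek)
    (hp : w.IsPath) : w.Unblocked W ↔ ∀ v ∈ w.support, v ≠ a → v ≠ b → v ∉ W := by
  cases w with
  | nil => simp [Unblocked]
  | @cons a b c k h w =>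
    have ha := (isPath_cons.1 hp).1
    rw [unblocked_cons, (isHalfTrek_cons.1 hw).2.unblockedFrom_iff, support_cons]
    simp only [List.mem_cons, forall_eq_or_imp, ne_eq, not_true_eq_false, false_imp_iff,
      true_and]
    exact forall₂_congr fun v hv => ⟨fun h _ => h, fun h => h fun hva => ha (hva ▸ hv)⟩

lemma IsHalfTrek.of_append_left {a b c : V} {u : Walk G a b} {w : Walk G b c}
    (h : (u.append w).IsHalfTrek) : u.IsHalfTrek := by
  cases u with
  | nil => trivial
  | cons k hk u => exact ⟨h.1, (isDirected_append.1 h.2).1⟩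

lemma IsHalfTrek.desc_end {a b v : V} {w : Walk G a b} (hw : w.IsHalfTrek)
    (hv : v ∈ w.support) (hva : v ≠ a) : G.desc v b := by
  cases w with
  | nil => exact absurd (List.mem_singleton.1 hv) hva
  | cons k h w => exact (isHalfTrek_cons.1 hw).2.desc_end v ((List.mem_cons.1 hv).resolve_left hva)

lemma IsHalfTrek.exists_append_isDirected {a b v : V} {w : Walk G a b} (hw : w.IsHalfTrek)
    (hv : v ∈ w.support) (hva : v ≠ a) :
    ∃ (q : Walk G a v) (r : Walk G v b), q.append r = w ∧ r.IsDirected := by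
  obtain ⟨q, r, rfl⟩ := exists_append_eq_of_mem_support w hv
  refine ⟨q, r, rfl, ?_⟩
  cases q with
  | nil => exact absurd rfl hva
  | cons k h q => exact (isDirected_append.1 hw.2).2

lemma mem_support_of_mem_right {a b v : V} {w : Walk G a b} (hv : v ∈ w.Right) :
    v ∈ w.support := by
  rcases hv with rfl | ⟨c, hc⟩
  · exact end_mem_support w
  · exact (mem_support_of_mem_darts hc).1

lemma darts_ne_nil {a b : V} {w : Walk G a b} (hab : a ≠ b) : w.darts ≠ [] := by
  cases w with
  | nil => exact absurd rfl hab
  | cons k h w => exact List.cons_ne_nil _ _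

lemma right_subset_of_darts_subset {a a' b : V} {w : Walk G a b} {w' : Walk G a' b}
    (h : w'.darts ⊆ w.darts) : w'.Right ⊆ w.Right :=
  Set.insert_subset_insert fun _ ⟨c, hc⟩ => ⟨c, h hc⟩

lemma exists_deleteDir_darts_eq {E : Set (V × V)} :
    ∀ {a b : V} (w : Walk G a b), (∀ e ∈ w.dirEdges, e ∉ E) →
      ∃ w' : Walk (G.deleteDir E) a b, w'.darts = w.darts
  | _, _, .nil a, _ => ⟨.nil a, rfl⟩
  | _, _, @Walk.cons _ _ a b _ k h w, hE => by
    obtain ⟨w', hw'⟩ := exists_deleteDir_darts_eq w fun e he => hE e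
      (Or.imp (List.mem_cons_of_mem _) (List.mem_cons_of_mem _) he)
    have hstep : (G.deleteDir E).stepOK a b k := by
      cases k with
      | fwd => exact ⟨h, hE (a, b) (Or.inl List.mem_cons_self)⟩
      | bwd => exact ⟨h, hE (b, a) (Or.inr List.mem_cons_self)⟩
      | bi => exact h
    exact ⟨.cons k hstep w', by simp [hw']⟩

lemma IsDirected.desc_start_deleteDir {E : Set (V × V)} {a b : V} {w : Walk G a b}
    (hw : w.IsDirected) (hE : ∀ e ∈ w.dirEdges, e ∉ E) :
    ∀ v ∈ w.support, (G.deleteDir E).desc a v := by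
  obtain ⟨w', hw'⟩ := exists_deleteDir_darts_eq w hE
  have hw'd : w'.IsDirected := by unfold Walk.IsDirected; rw [hw']; exact hw
  exact fun v hv => hw'd.desc_start v (by rwa [support_eq_of_darts_eq hw'])

lemma IsHalfTrek.exists_deleteDir {E : Set (V × V)} {a b : V} {w : Walk G a b}
    (hw : w.IsHalfTrek) (hp : w.IsPath) (hu : w.Unblocked W) (hE : ∀ e ∈ w.dirEdges, e ∉ E) :
    ∃ w' : Walk (G.deleteDir E) a b,
      w'.support = w.support ∧ w'.IsPath ∧ w'.IsHalfTrek ∧ w'.Unblocked W := by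
  obtain ⟨w', hw'⟩ := exists_deleteDir_darts_eq w hE
  have hs : w'.support = w.support := support_eq_of_darts_eq hw'
  have hw'p : w'.IsPath := by unfold IsPath; rw [hs]; exact hp
  have hw'h : w'.IsHalfTrek := isHalfTrek_iff_darts.2 (hw' ▸ isHalfTrek_iff_darts.1 hw)
  exact ⟨w', hs, hw'p, hw'h, (hw'h.unblocked_iff hw'p).2 (hs ▸ (hw.unblocked_iff hp).1 hu)⟩

lemma exists_splice_unblockedFrom {t u : V} {D : Walk G t u} (hD : D.IsPath) {v : V}
    (A : Walk G v t) (hA : A.IsPath)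
    (hjoin : ∀ (x : V) (D₁ : Walk G t x) (D₂ : Walk G x u), D₁.append D₂ = D →
      x ∈ A.support → ∀ kin, D₂.UnblockedFrom W kin)
    (kin : EKind) (hAu : A.UnblockedFrom W kin) :
    ∃ R : Walk G v u, R.IsPath ∧ R.UnblockedFrom W kin ∧
      ∀ x ∈ R.support, x ∈ A.support ∨ x ∈ D.support := by
  induction A generalizing kin with
  | nil => exact ⟨D, hD, hjoin _ (.nil _) D rfl (start_mem_support _) kin, fun _ => Or.inr⟩
  | @cons v b _ k h A ih =>
    by_cases hv : v ∈ D.support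
    · obtain ⟨D₁, D₂, rfl⟩ := exists_append_eq_of_mem_support D hv
      exact ⟨D₂, hD.of_append_right, hjoin v D₁ D₂ rfl (start_mem_support _) kin,
        fun y hy => Or.inr ((mem_support_append D₁ D₂).2 (Or.inr hy))⟩
    obtain ⟨hvA, hA⟩ := isPath_cons.1 hA
    obtain ⟨R, hR, hRu, hRA⟩ := ih hD hA
      (fun x D₁ D₂ h hx => hjoin x D₁ D₂ h (List.mem_cons_of_mem _ hx)) k hAu.2
    refine ⟨.cons k h R, isPath_cons.2 ⟨fun hvR => (hRA v hvR).elim hvA hv, hR⟩,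
      ⟨hAu.1, hRu⟩, fun x hx => ?_⟩
    rcases List.mem_cons.1 hx with rfl | hx
    · exact Or.inl (start_mem_support _)
    · exact (hRA x hx).imp_left (List.mem_cons_of_mem _)

/-- Follow `A` until it first meets `D`, then follow `D`; `hjoin` makes every possible junction
open. -/
lemma exists_splice {s t u : V} (A : Walk G s t) (D : Walk G t u) (hA : A.IsPath)
    (hAu : A.Unblocked W) (hD : D.IsPath) (hDu : D.Unblocked W)
    (hjoin : ∀ (x : V) (D₁ : Walk G t x) (D₂ : Walk G x u), D₁.append D₂ = D →
      x ∈ A.support → x ≠ s → ∀ kin, D₂.UnblockedFrom W kin) :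
    ∃ R : Walk G s u, R.IsPath ∧ R.Unblocked W := by
  by_cases hs : s ∈ D.support
  · obtain ⟨D₁, D₂, rfl⟩ := exists_append_eq_of_mem_support D hs
    exact ⟨D₂, hD.of_append_right, hDu.of_append_right⟩
  cases A with
  | nil => exact absurd (start_mem_support D) hs
  | cons k h A =>
    obtain ⟨hsA, hA⟩ := isPath_cons.1 hA
    obtain ⟨R, hR, hRu, hRA⟩ := exists_splice_unblockedFrom hD A hA
      (fun x D₁ D₂ h hx => hjoin x D₁ D₂ h (List.mem_cons_of_mem _ hx)
        fun hxs => hsA (hxs ▸ hx)) k hAu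
    exact ⟨.cons k h R, isPath_cons.2 ⟨fun hsR => (hRA s hsR).elim hsA hs, hR⟩, hRu⟩

end Walk

namespace MixedGraph

open Walk

variable {V : Type} {G : MixedGraph V} {W : Set V}

lemma dsep.ne {z t : V} (hd : G.dsep z t W) : z ≠ t := by
  rintro rfl
  exact hd (.nil z) (List.nodup_singleton _) trivial

lemma dsep.not_desc {z t : V} (hd : G.dsep z t W) (hW : ∀ w ∈ W, ¬ G.desc t w) :
    ¬ G.desc t z := fun htz =>
  let ⟨w, hw, hwu⟩ := exists_unblocked_path_of_desc htz fun x htx hxW => hW x hxW htx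
  hd w hw hwu

lemma dsep.exists_mem_desc {s t v : V} (hd : G.dsep s t W) (A : Walk G s v) (hA : A.IsPath)
    (hAu : A.Unblocked W) (hvt : G.desc v t) : ∃ d ∈ W, G.desc v d := by
  by_contra! hv
  obtain ⟨D, hD⟩ := exists_isDirected_of_desc hvt
  have hDW : ∀ x ∈ D.support, x ∉ W := fun x hx hxW => hv x hxW (hD.desc_start x hx)
  obtain ⟨R, hR, hRu⟩ := exists_splice A D hA hAu hD.isPath
    ((hD.isHalfTrek.unblocked_iff hD.isPath).2 fun x hx _ _ => hDW x hx)
    fun x D₁ D₂ hD₁₂ _ _ kin => by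
      subst hD₁₂
      exact ((isDirected_append.1 hD).2.unblockedFrom_iff kin).2 fun y hy _ =>
        hDW y ((mem_support_append D₁ D₂).2 (Or.inr hy))
  exact hd R hR hRu

lemma dsep.of_unblocked_path {s t v : V} (hd : G.dsep s t W) (A : Walk G s v)
    (hA : A.IsPath) (hAu : A.Unblocked W)
    (hAW : ∀ x ∈ A.support, x ≠ s → x ∉ W ∧ ∃ d ∈ W, G.desc x d) : G.dsep v t W := by
  intro π hπ hπu
  obtain ⟨R, hR, hRu⟩ := exists_splice A π hA hAu hπ hπu fun x D₁ D₂ hD₁₂ hxA hxs kin => by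
    subst hD₁₂
    exact hπu.of_append_right.unblockedFrom (hAW x hxA hxs).1 (hAW x hxA hxs).2 kin
  exact hd R hR hRu

theorem dsep_restricted_canonical {z t : V} {Wz R : Set V} (hz : G.dsep z t Wz)
    (hWt : ∀ w ∈ Wz, ¬ G.desc t w) (hzW : ∃ d ∈ Wz, G.desc z d)
    (hR : ∀ v ∈ R, G.desc z v ∧ ¬ G.desc v t) :
    G.dsep z t {v | (G.desc v z ∨ G.desc v t) ∧ ¬ G.desc t v ∧ v ∉ R} := by
  set S := {v | (G.desc v z ∨ G.desc v t) ∧ ¬ G.desc t v ∧ v ∉ R}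
  intro π hπ hπu
  have hzt : ¬ G.desc t z := hz.not_desc hWt
  have hanc : ∀ v ∈ π.support, G.desc v z ∨ G.desc v t := fun v hv => by
    rcases hπu.desc_cases v hv with h | h | ⟨d, hd, hvd⟩
    exacts [Or.inl h, Or.inr h, hd.1.imp hvd.trans hvd.trans]
  -- every inner vertex of `π` lies in `S`, so all of them are colliders
  have hmem : ∀ v ∈ π.support, v ≠ z → v ≠ t → v ∈ S := fun v hv hvz hvt => by
    refine ⟨hanc v hv, fun htv => ?_, fun hvR => ?_⟩
    · rcases hanc v hv with h | h
      exacts [hzt (htv.trans h), hvt (desc_antisymm h htv)]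
    · rcases hanc v hv with h | h
      exacts [hvz (desc_antisymm h (hR v hvR).1), (hR v hvR).2 h]
  -- the prefix of `π` up to its first vertex without a descendant in `Wz` is unblocked given `Wz`
  obtain ⟨v, π₁, π₂, rfl, hvW, hπ₁W⟩ := π.exists_append_eq_first (¬ ∃ d ∈ Wz, G.desc · d)
    ⟨t, end_mem_support _, fun ⟨d, hd, htd⟩ => hWt d hd htd⟩
  have hvt : G.desc v t := (hanc v ((mem_support_append π₁ π₂).2 (Or.inr
    (start_mem_support π₂)))).resolve_left fun hvz =>
      hvW (let ⟨d, hd, hzd⟩ := hzW; ⟨d, hd, hvz.trans hzd⟩)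
  refine hvW (hz.exists_mem_desc π₁ hπ.of_append_left (hπu.of_append_left.mono
    hπ.of_append_left fun x hx hxz hxv => ⟨fun hxS => ?_, fun _ => not_not.1 (hπ₁W x hx hxv)⟩) hvt)
  have hxt : x ≠ t := fun hxt => hxv (hπ.eq_of_mem_append hx (hxt ▸ end_mem_support π₂))
  exact absurd (hmem x ((mem_support_append π₁ π₂).2 (Or.inl hx)) hxz hxt) hxS

end MixedGraph

theorem exists_perm_of_cycle {α : Type} [DecidableEq α] {P : α → α → Prop} {m : ℕ}
    (f : Fin (m + 2) → α) (hf : Function.Injective f) (hP : ∀ l, P (f l) (f (l + 1))) :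
    ∃ σ : Equiv.Perm α, (∃ a, σ a ≠ a) ∧ ∀ a, σ a ≠ a → P a (σ a) := by
  have hσ : ∀ l, (List.ofFn f).formPerm (f l) = f (l + 1) := fun l => by
    have := List.formPerm_apply_getElem _ (List.nodup_ofFn.2 hf) l (by simp [l.is_lt])
    simp only [List.getElem_ofFn, List.length_ofFn] at this
    rw [this]
    congr 1
  refine ⟨(List.ofFn f).formPerm, ⟨f 0, ?_⟩, fun a ha => ?_⟩
  · rw [hσ]
    exact hf.ne (by simp)
  · obtain ⟨l, rfl⟩ := List.mem_ofFn.1 (List.mem_of_formPerm_apply_ne ha)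
    rw [hσ]
    exact hP l

section Rotation

open Walk MixedGraph

variable {V : Type} {G : MixedGraph V} {E : Set (V × V)} {y : V}

lemma notMem_support_of_dsep {zi xi : V} {Wi : Set V} {p : Walk G zi xi}
    (hph : p.IsHalfTrek) (hxy : G.dir xi y) (hdi : (G.deleteDir E).dsep zi y Wi) :
    y ∉ p.support := fun hy => by
  by_cases hyz : y = zi
  · exact hdi.ne hyz.symm
  · exact G.acyclic y (Relation.TransGen.tail' (hph.desc_end hy hyz) hxy)

theorem exists_separator_of_append (hEy : ∀ e ∈ E, e.2 = y) {zi zj xi : V} {Wi Wj : Set V}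
    (hxy : G.dir xi y) {q : Walk G zi zj} {r : Walk G zj xi} (hp : (q.append r).IsPath)
    (hpu : (q.append r).Unblocked Wi) (hph : (q.append r).IsHalfTrek) (hr : r.IsDirected)
    (hne : zj ≠ zi) (hWi : ∀ w ∈ Wi, ¬ G.desc y w) (hWj : ∀ w ∈ Wj, ¬ G.desc y w)
    (hdi : (G.deleteDir E).dsep zi y Wi) (hdj : (G.deleteDir E).dsep zj y Wj) :
    ∃ W : Set V, (∀ w ∈ W, ¬ G.desc y w) ∧ (G.deleteDir E).dsep zj y W ∧ r.Unblocked W := by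
  set p := q.append r
  have hrp : r.IsPath := hp.of_append_right
  have hrW : ∀ W : Set V, (∀ v ∈ r.support, v ≠ zj → v ≠ xi → v ∉ W) → r.Unblocked W :=
    fun W => (hr.isHalfTrek.unblocked_iff hrp).2
  by_cases hi : ∀ v ∈ r.support, v ≠ zj → v ≠ xi → v ∉ Wj
  · exact ⟨Wj, hWj, hdj, hrW Wj hi⟩
  obtain ⟨u, hur, huzj, huxi, huW⟩ : ∃ u ∈ r.support, u ≠ zj ∧ u ≠ xi ∧ u ∈ Wj := by
    simpa using hi
  have hzjxi : zj ≠ xi := fun h => huzj (hrp.eq_of_mem_of_eq h hur)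
  have hmemp : ∀ v ∈ r.support, v ∈ p.support :=
    fun v hv => (mem_support_append q r).2 (Or.inr hv)
  have hint : ∀ v ∈ p.support, v ≠ zi → v ≠ xi → v ∉ Wi := (hph.unblocked_iff hp).1 hpu
  have hzir : zi ∉ r.support := fun h => hne (hp.eq_of_mem_append (start_mem_support q) h).symm
  -- `p` avoids `y`, so it survives the deletion of the edges into `y`
  have hnotE : ∀ {a b : V} (w : Walk G a b), (∀ v ∈ w.support, v ∈ p.support) →
      ∀ e ∈ w.dirEdges, e ∉ E := fun w hw e he heE =>
    notMem_support_of_dsep hph hxy hdi (hw _ (hEy e heE ▸ (mem_support_of_mem_dirEdges he).2))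
  obtain ⟨p', hp's, hp'p, hp'h, hp'u⟩ := hph.exists_deleteDir hp hpu (hnotE p fun _ => id)
  have hzjdesc := hr.desc_start_deleteDir (hnotE r hmemp)
  by_cases hii : ∃ d ∈ Wi, (G.deleteDir E).desc zj d
  · refine ⟨Wi, hWi, ?_, hrW Wi fun v hv _ => hint v (hmemp v hv) fun h => hzir (h ▸ hv)⟩
    -- the head of `p` up to `zj` is open, and its inner vertices reach `Wi` through `zj`
    obtain ⟨A, B, rfl⟩ := exists_append_eq_of_mem_support p' (hp's ▸ hmemp zj (start_mem_support r))
    refine hdi.of_unblocked_path A hp'p.of_append_left hp'u.of_append_left fun x hx hxzi =>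
      ⟨hint x ?_ hxzi fun hxxi => ?_, ?_⟩
    · exact hp's ▸ (mem_support_append A B).2 (Or.inl hx)
    · exact hzjxi ((hp'p.eq_of_mem_append hx (hxxi ▸ end_mem_support B)).symm.trans hxxi)
    · obtain ⟨d, hd, hzjd⟩ := hii
      exact ⟨d, hd, (hp'h.of_append_left.desc_end hx hxzi).trans hzjd⟩
  · refine ⟨{v | ((G.deleteDir E).desc v zj ∨ (G.deleteDir E).desc v y) ∧
      ¬ (G.deleteDir E).desc y v ∧ v ∉ r.support},
      fun w hw hyw => hw.2.1 (desc_deleteDir_of_desc hEy hyw),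
      dsep_restricted_canonical hdj (fun w hw hyw => hWj w hw (desc_of_deleteDir hyw))
        ⟨u, huW, hzjdesc u hur⟩ fun v hv => ⟨hzjdesc v hv, fun hvy => ?_⟩,
      hrW _ fun v hv _ _ hvS => hvS.2.2 hv⟩
    -- a vertex of `r` reaching `y` would pass its descendant in `Wi` on to `zj`
    obtain ⟨A, B, rfl⟩ := exists_append_eq_of_mem_support p' (hp's ▸ hmemp v hv)
    obtain ⟨d, hd, hvd⟩ :=
      hdi.exists_mem_desc A hp'p.of_append_left hp'u.of_append_left hvy
    exact hii ⟨d, hd, (hzjdesc v hv).trans hvd⟩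

theorem exists_rotated_halfTrek (hEy : ∀ e ∈ E, e.2 = y) {zi zj xi : V} {Wi Wj : Set V}
    (hxy : G.dir xi y) {p : Walk G zi xi} (hp : p.IsPath) (hpu : p.Unblocked Wi)
    (hph : p.IsHalfTrek) (hWi : ∀ w ∈ Wi, ¬ G.desc y w) (hWj : ∀ w ∈ Wj, ¬ G.desc y w)
    (hdi : (G.deleteDir E).dsep zi y Wi) (hdj : (G.deleteDir E).dsep zj y Wj)
    (hzj : zj ∈ p.Right) (hne : zj ≠ zi) :
    ∃ (W : Set V) (r : Walk G zj xi), (∀ w ∈ W, ¬ G.desc y w) ∧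
      (G.deleteDir E).dsep zj y W ∧ r.IsPath ∧ r.Unblocked W ∧ r.IsHalfTrek ∧
      r.Right ⊆ p.Right ∧ r.darts.length < p.darts.length := by
  obtain ⟨q, r, rfl, hr⟩ := hph.exists_append_isDirected (mem_support_of_mem_right hzj) hne
  obtain ⟨W, hW, hdW, hru⟩ :=
    exists_separator_of_append hEy hxy hp hpu hph hr hne hWi hWj hdi hdj
  refine ⟨W, r, hW, hdW, hp.of_append_right, hru, hr.isHalfTrek,
    right_subset_of_darts_subset (by simp [darts_append]), ?_⟩
  have := List.length_pos_of_ne_nil (darts_ne_nil (w := q) hne.symm)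
  simp only [darts_append, List.length_append]
  omega

end Rotation

section Witness

open Walk

variable {V : Type} {G : MixedGraph V} {k : ℕ} {x : Fin k → V} {y : V} {z : Fin k → V}
  {Wc : Fin k → Set V} {p : ∀ i, Walk G (z i) (x i)}

lemma gisWitness_iff_of_isHalfTrek (hht : ∀ i, (p i).IsHalfTrek) :
    GISWitness G x y z Wc p ↔
      (∀ i, (∀ w ∈ Wc i, ¬ G.desc y w) ∧
        (G.deleteDir {e | ∃ j, e = (x j, y)}).dsep (z i) y (Wc i)) ∧
      (∀ i, (p i).IsPath ∧ (p i).Unblocked (Wc i)) ∧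
      Function.Injective z ∧ ∀ i j, i ≠ j → (p i).Right ∩ (p j).Right = ∅ := by
  simp only [GISWitness, (hht _).left_eq, Set.singleton_inter_eq_empty, Set.mem_singleton_iff,
    imp_and, forall_and, Function.injective_iff_pairwise_ne]
  rfl

theorem exists_shorter_witness (hE : ∀ i, G.dir (x i) y) (hwit : GISWitness G x y z Wc p)
    (hht : ∀ i, (p i).IsHalfTrek) (σ : Equiv.Perm (Fin k)) (hσ : ∃ i, σ i ≠ i)
    (hσR : ∀ i, σ i ≠ i → z (σ i) ∈ (p i).Right) :
    ∃ (z' : Fin k → V) (Wc' : Fin k → Set V) (p' : ∀ i, Walk G (z' i) (x i)),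
      GISWitness G x y z' Wc' p' ∧ (∀ i, (p' i).IsHalfTrek) ∧
      ∑ i, (p' i).darts.length < ∑ i, (p i).darts.length := by
  obtain ⟨hsep, hpath, hinj, hright⟩ := (gisWitness_iff_of_isHalfTrek hht).1 hwit
  have hEy : ∀ e ∈ {e : V × V | ∃ j, e = (x j, y)}, e.2 = y := by rintro _ ⟨j, rfl⟩; rfl
  have hnew : ∀ i, ∃ (zi : V) (Wi : Set V) (pi : Walk G zi (x i)), zi = z (σ i) ∧
      ((∀ w ∈ Wi, ¬ G.desc y w) ∧ (G.deleteDir {e | ∃ j, e = (x j, y)}).dsep zi y Wi) ∧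
      (pi.IsPath ∧ pi.Unblocked Wi) ∧ pi.IsHalfTrek ∧ pi.Right ⊆ (p i).Right ∧
      pi.darts.length ≤ (p i).darts.length ∧
      (σ i ≠ i → pi.darts.length < (p i).darts.length) := fun i => by
    by_cases hi : σ i = i
    · exact ⟨z i, Wc i, p i, by rw [hi], hsep i, hpath i, hht i, subset_rfl, le_rfl,
        fun h => absurd hi h⟩
    obtain ⟨W, r, hW, hdW, hr, hru, hrh, hrR, hlt⟩ := exists_rotated_halfTrek hEy (hE i)
      (hpath i).1 (hpath i).2 (hht i) (hsep i).1 (hsep (σ i)).1 (hsep i).2 (hsep (σ i)).2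
      (hσR i hi) (hinj.ne hi)
    exact ⟨_, W, r, rfl, ⟨hW, hdW⟩, ⟨hr, hru⟩, hrh, hrR, hlt.le, fun _ => hlt⟩
  choose z' Wc' p' hz' hsep' hpath' hht' hR' hle hlt using hnew
  refine ⟨z', Wc', p', (gisWitness_iff_of_isHalfTrek hht').2 ⟨hsep', hpath', ?_, ?_⟩, hht', ?_⟩
  · exact fun i j h => σ.injective (hinj (by rw [← hz', ← hz', h]))
  · exact fun i j hij => Set.subset_eq_empty (Set.inter_subset_inter (hR' i) (hR' j))
      (hright i j hij)
  · obtain ⟨i, hi⟩ := hσ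
    exact Finset.sum_lt_sum (fun i _ => hle i) ⟨i, Finset.mem_univ _, hlt i hi⟩

end Witness

/-- **Intersection-loop removal.** There exists a GIS-witness with all paths half-treks iff
there exists one whose paths contain no intersection loop (a cyclic sequence of distinct
half-treks in which the `Right` of each meets the `Left` of the next). -/
theorem gis_intersection_loop_removal {V : Type} (G : MixedGraph V)
    (k : ℕ) (x : Fin k → V) (y : V) (hE : ∀ i, G.dir (x i) y) :
    (∃ (z : Fin k → V) (Wc : Fin k → Set V) (p : ∀ i, Walk G (z i) (x i)),
      GISWitness G x y z Wc p ∧ ∀ i, (p i).IsHalfTrek) ↔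
    (∃ (z : Fin k → V) (Wc : Fin k → Set V) (p : ∀ i, Walk G (z i) (x i)),
      GISWitness G x y z Wc p ∧ (∀ i, (p i).IsHalfTrek) ∧
      ¬ ∃ (m : ℕ) (f : Fin (m + 2) → Fin k), Function.Injective f ∧
        ∀ l : Fin (m + 2), ((p (f l)).Right ∩ (p (f (l + 1))).Left).Nonempty) := by
  refine ⟨fun hex => ?_, fun ⟨z, Wc, p, hwit, hht, _⟩ => ⟨z, Wc, p, hwit, hht⟩⟩
  have hlen : ∃ n, ∃ (z : Fin k → V) (Wc : Fin k → Set V) (p : ∀ i, Walk G (z i) (x i)),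
      GISWitness G x y z Wc p ∧ (∀ i, (p i).IsHalfTrek) ∧ ∑ i, (p i).darts.length = n :=
    let ⟨z, Wc, p, hwit, hht⟩ := hex
    ⟨_, z, Wc, p, hwit, hht, rfl⟩
  obtain ⟨z, Wc, p, hwit, hht, hmin⟩ := Nat.find_spec hlen
  refine ⟨z, Wc, p, hwit, hht, fun ⟨m, f, hf, hloop⟩ => ?_⟩
  obtain ⟨σ, hσ, hσR⟩ := exists_perm_of_cycle (P := fun i j => z j ∈ (p i).Right) f hf
    fun l => by simpa [(hht _).left_eq] using hloop l
  obtain ⟨z', Wc', p', hwit', hht', hlt⟩ := exists_shorter_witness hE hwit hht σ hσ hσR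
  exact Nat.find_min hlen (hmin ▸ hlt) ⟨z', Wc', p', hwit', hht', rfl⟩

end SEMPaper
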